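/- arXiv:2401.05321 — 7 statements merged into one kernel-verified Lean document; each statement's English description precedes it below -/
import Mathlib

section
/- Let A be an m×n matrix over a field F that is (k,h,c)-rigid, and let k' = ⌈ck⌉. Then for every subset U of k rows of A, there exist ℓ = ⌈h/k'⌉ pairwise disjoint k'-subsets V_1,...,V_ℓ of columns and corresponding subsets U_1,...,U_ℓ ⊆ U of rows such that for each j, the k'×k' submatrix A_{U_j,V_j} has full rank k'. In particular, the union of the V_j has size at least h. -/
/-! Greedy extraction. However the fewer than `h` columns used so far are chosen, rigidity says
the rows `U` still have rank at least `k'` on the remaining columns, so they contain a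
nonsingular `k' × k'` submatrix (take `k'` independent rows, then `k'` independent columns of
those). Taking its columns out and repeating, each round uses `k'` fresh columns, so
`⌈h / k'⌉` rounds are possible and together they cover at least `h` columns. -/

open Finset Function

/-- An `m × n` matrix `A` over a field is `(k, h, c)`-rigid if for every set `U` of `k` rows
and every set `W` of fewer than `h` columns, the submatrix of `A` consisting of rows `U` and
the columns outside `W` has rank at least `⌈c·k⌉`. -/
def Rigid {F : Type*} [Field F] {ι κ : Type*} [Fintype ι] [Fintype κ]
    [DecidableEq ι] [DecidableEq κ] (A : Matrix ι κ F) (k h : ℕ) (c : ℝ) : Prop :=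
  ∀ U : Finset ι, U.card = k → ∀ W : Finset κ, W.card < h →
    ⌈c * (k : ℝ)⌉₊ ≤ (A.submatrix (fun i : ↥U => (i : ι)) (fun j : ↥(Wᶜ) => (j : κ))).rank

namespace Matrix

variable {F : Type*} [Field F]

section

variable {ι κ : Type*} [Fintype ι] [Fintype κ]

theorem exists_finset_linearIndepOn_row_card_eq (B : Matrix ι κ F) {r : ℕ} (hr : r ≤ B.rank) :
    ∃ s : Finset ι, s.card = r ∧ LinearIndepOn F B.row s := by
  classical
  obtain ⟨b, -, -, hspan, hli⟩ :=
    exists_linearIndepOn_extension (linearIndepOn_empty F B.row) (Set.empty_subset Set.univ)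
  have hrank : B.rank = b.toFinset.card := by
    rw [rank_eq_finrank_span_row, ← Set.image_univ, le_antisymm (Submodule.span_le.2 hspan)
      (Submodule.span_mono (Set.image_mono (Set.subset_univ b))), Set.image_eq_range,
      finrank_span_eq_card hli, Set.toFinset_card]
  obtain ⟨s, hsb, hs⟩ := Finset.exists_subset_card_eq (hrank ▸ hr)
  exact ⟨s, hs, hli.mono (by simpa using hsb)⟩

theorem exists_submatrix_rank_eq_card (B : Matrix ι κ F) {r : ℕ} (hr : r ≤ B.rank) :
    ∃ (s : Finset ι) (t : Finset κ), s.card = r ∧ t.card = r ∧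
      (B.submatrix ((↑) : s → ι) ((↑) : t → κ)).rank = r := by
  obtain ⟨s, hs, hs_li⟩ := B.exists_finset_linearIndepOn_row_card_eq hr
  set B₁ := B.submatrix ((↑) : s → ι) id
  have hB₁ : B₁ᵀ.rank = r := by
    rw [rank_transpose, LinearIndependent.rank_matrix (M := B₁) hs_li, Fintype.card_coe, hs]
  obtain ⟨t, ht, ht_li⟩ := B₁ᵀ.exists_finset_linearIndepOn_row_card_eq hB₁.ge
  refine ⟨s, t, hs, ht, ?_⟩
  rw [← rank_transpose,
    LinearIndependent.rank_matrix (M := (B.submatrix ((↑) : s → ι) ((↑) : t → κ))ᵀ) ht_li,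
    Fintype.card_coe, ht]

end

theorem exists_subset_submatrix_rank_eq_card {ι κ : Type*} (A : Matrix ι κ F)
    (P : Finset ι) (Q : Finset κ) {r : ℕ}
    (hr : r ≤ (A.submatrix ((↑) : P → ι) ((↑) : Q → κ)).rank) :
    ∃ s ⊆ P, ∃ t ⊆ Q, s.card = r ∧ t.card = r ∧
      (A.submatrix ((↑) : s → ι) ((↑) : t → κ)).rank = r := by
  obtain ⟨s, t, hs, ht, hst⟩ := exists_submatrix_rank_eq_card _ hr
  refine ⟨s.map (.subtype _), by simp +contextual [subset_iff],
    t.map (.subtype _), by simp +contextual [subset_iff], by simpa, by simpa, ?_⟩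
  rw [← hst, ← rank_submatrix _ (s.equivMap _) (t.equivMap _)]
  rfl

end Matrix

theorem Pairwise.finSnoc {β : Type*} {r : β → β → Prop} [Std.Symm r] {t : ℕ}
    {f : Fin t → β} {b : β} (hf : Pairwise (r on f)) (hb : ∀ j, r (f j) b) :
    Pairwise (r on (Fin.snoc f b : Fin (t + 1) → β)) := by
  intro i j hij
  induction i using Fin.lastCases <;> induction j using Fin.lastCases
  · exact absurd rfl hij
  · simpa [onFun] using Std.Symm.symm _ _ (hb _)
  · simpa [onFun] using hb _
  · simpa [onFun] using hf (ne_of_apply_ne _ hij)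

theorem Finset.card_biUnion_univ_of_pairwise_disjoint {α : Type*} [DecidableEq α] {t r : ℕ}
    {V : Fin t → Finset α} (hV : Pairwise (Disjoint on V)) (hcard : ∀ j, (V j).card = r) :
    (univ.biUnion V).card = t * r := by
  rw [card_biUnion fun i _ j _ hij => hV hij]
  simp [hcard]

/-- The bound `t * r < h + r` says that the first `t - 1` blocks cover fewer than `h` points. -/
theorem exists_pairwise_disjoint_of_forall_card_lt {α : Type*} [DecidableEq α]
    (P : Finset α → Prop) {r h : ℕ} (hcard : ∀ s, P s → s.card = r)
    (hP : ∀ W : Finset α, W.card < h → ∃ s, P s ∧ Disjoint s W) :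
    ∀ t, t * r < h + r → ∃ V : Fin t → Finset α, Pairwise (Disjoint on V) ∧ ∀ j, P (V j)
  | 0, _ => ⟨Fin.elim0, fun i => i.elim0, fun j => j.elim0⟩
  | t + 1, ht => by
    obtain ⟨V, hV, hVP⟩ := exists_pairwise_disjoint_of_forall_card_lt P hcard hP t (by
      rw [add_one_mul] at ht; omega)
    have hW : (univ.biUnion V).card < h := by
      rw [card_biUnion_univ_of_pairwise_disjoint hV fun j => hcard _ (hVP j)]
      rw [add_one_mul] at ht; omega
    obtain ⟨s, hs, hsW⟩ := hP _ hW
    refine ⟨Fin.snoc V s, hV.finSnoc fun j => ?_, Fin.lastCases ?_ ?_⟩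
    · exact (hsW.mono_right (subset_biUnion_of_mem V (mem_univ j))).symm
    · simpa using hs
    · simpa using hVP

theorem Nat.ceil_natCast_div_mul_mem_Ico {K : Type*} [Field K] [LinearOrder K] [IsStrictOrderedRing K]
    [FloorSemiring K] (h : ℕ) {r : ℕ} (hr : 0 < r) :
    ⌈(h : K) / r⌉₊ * r ∈ Set.Ico h (h + r) := by
  have hr' : (0 : K) < r := by exact_mod_cast hr
  have lower : (h : K) ≤ ⌈(h : K) / r⌉₊ * r := (div_le_iff₀ hr').1 (Nat.le_ceil _)
  have upper : (⌈(h : K) / r⌉₊ : K) * r < h + r := by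
    calc (⌈(h : K) / r⌉₊ : K) * r < (h / r + 1) * r := by
          gcongr; exact Nat.ceil_lt_add_one (by positivity)
      _ = h + r := by field_simp
  exact ⟨by exact_mod_cast lower, by exact_mod_cast upper⟩

theorem Rigid.exists_fullRankBlock_disjoint {F ι κ : Type*} [Field F] [Fintype ι] [Fintype κ]
    [DecidableEq ι] [DecidableEq κ] {A : Matrix ι κ F} {k h : ℕ} {c : ℝ} (hA : Rigid A k h c)
    {U : Finset ι} (hU : U.card = k) {W : Finset κ} (hW : W.card < h) :
    ∃ V : Finset κ, (V.card = ⌈c * (k : ℝ)⌉₊ ∧ ∃ Us ⊆ U, Us.card = ⌈c * (k : ℝ)⌉₊ ∧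
      (A.submatrix ((↑) : Us → ι) ((↑) : V → κ)).rank = ⌈c * (k : ℝ)⌉₊) ∧ Disjoint V W := by
  obtain ⟨Us, hUsU, V, hVW, hUs, hV, hrank⟩ :=
    A.exists_subset_submatrix_rank_eq_card U Wᶜ (hA U hU W hW)
  exact ⟨V, ⟨hV, Us, hUsU, hUs, hrank⟩, subset_compl_iff_disjoint_right.1 hVW⟩

theorem stmt0_general {F : Type*} [Field F] {m n k h : ℕ} {c : ℝ} (hc0 : 0 < c)
    (hk : 0 < k) (A : Matrix (Fin m) (Fin n) F) (hA : Rigid A k h c)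
    (U : Finset (Fin m)) (hU : U.card = k) :
    ∃ (V : Fin ⌈(h : ℝ) / (⌈c * (k : ℝ)⌉₊ : ℝ)⌉₊ → Finset (Fin n))
      (Us : Fin ⌈(h : ℝ) / (⌈c * (k : ℝ)⌉₊ : ℝ)⌉₊ → Finset (Fin m)),
      (∀ i j, i ≠ j → Disjoint (V i) (V j)) ∧
      (∀ j, (V j).card = ⌈c * (k : ℝ)⌉₊) ∧
      (∀ j, Us j ⊆ U) ∧
      (∀ j, (Us j).card = ⌈c * (k : ℝ)⌉₊) ∧
      (∀ j, (A.submatrix (fun i : ↥(Us j) => (i : Fin m))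
          (fun i : ↥(V j) => (i : Fin n))).rank = ⌈c * (k : ℝ)⌉₊) ∧
      h ≤ (Finset.univ.biUnion V).card := by
  set k' := ⌈c * (k : ℝ)⌉₊
  have hk' : 0 < k' := Nat.ceil_pos.2 (by positivity)
  obtain ⟨h_le, lt_h_add⟩ := Nat.ceil_natCast_div_mul_mem_Ico (K := ℝ) h hk'
  obtain ⟨V, hV, hVblock⟩ := exists_pairwise_disjoint_of_forall_card_lt _ (fun _ hs => hs.1)
    (fun _ hW => hA.exists_fullRankBlock_disjoint hU hW) _ lt_h_add
  choose Us hUs using fun j => (hVblock j).2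
  refine ⟨V, Us, fun i j hij => hV hij, fun j => (hVblock j).1, fun j => (hUs j).1,
    fun j => (hUs j).2.1, fun j => (hUs j).2.2, ?_⟩
  rwa [card_biUnion_univ_of_pairwise_disjoint hV fun j => (hVblock j).1]

/-- Partition lemma: for a `(k,h,c)`-rigid matrix and any set `U` of `k` rows, there are
`ℓ = ⌈h/k'⌉` pairwise disjoint `k'`-subsets of columns `V_1,…,V_ℓ` (where `k' = ⌈ck⌉`) and
subsets `U_1,…,U_ℓ ⊆ U` of rows such that each `k'×k'` submatrix `A_{U_j,V_j}` has full rank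
`k'`; in particular the union of the `V_j` has size at least `h`. -/
theorem stmt0 {F : Type*} [Field F] {m n k h : ℕ} {c : ℝ} (hc0 : 0 < c) (hc1 : c ≤ 1)
    (hk : 0 < k) (A : Matrix (Fin m) (Fin n) F) (hA : Rigid A k h c)
    (U : Finset (Fin m)) (hU : U.card = k) :
    ∃ (V : Fin ⌈(h : ℝ) / (⌈c * (k : ℝ)⌉₊ : ℝ)⌉₊ → Finset (Fin n))
      (Us : Fin ⌈(h : ℝ) / (⌈c * (k : ℝ)⌉₊ : ℝ)⌉₊ → Finset (Fin m)),
      (∀ i j, i ≠ j → Disjoint (V i) (V j)) ∧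
      (∀ j, (V j).card = ⌈c * (k : ℝ)⌉₊) ∧
      (∀ j, Us j ⊆ U) ∧
      (∀ j, (Us j).card = ⌈c * (k : ℝ)⌉₊) ∧
      (∀ j, (A.submatrix (fun i : ↥(Us j) => (i : Fin m))
          (fun i : ↥(V j) => (i : Fin n))).rank = ⌈c * (k : ℝ)⌉₊) ∧
      h ≤ (Finset.univ.biUnion V).card :=
  stmt0_general hc0 hk A hA U hU
end

section
/- Let γ ∈ (0,1/2), and let A and B be n×n matrices over a field that are both (γn, γn)-rigid. Then the Kronecker product A ⊗ B is (γ²n², γ²n², γ²)-rigid. -/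
/-!
Put `t = ⌈γn⌉ ≤ n`, so that `t² ≥ γ²n²`. Averaging (greedily, one coordinate at a time) gives
`t`-sets `S` of rows of `A` and `J` of rows of `B` whose rectangle `S × J` contains at least a
`(t/n)² ≥ γ²` fraction of the chosen rows `U` of `A ⊗ B`. Since `|W| < t²`, fewer than `t`
columns `c` of `A` are heavy, i.e. carry `t` or more deleted columns `(c, d) ∈ W`. Off the heavy
columns the rows `S` of `A` stay independent, and for every other `c` the rows `J` of `B` stay
independent off the deleted `d`'s; peeling off `B` and then `A`, any vanishing combination of the
rows `S × J` of `A ⊗ B` off `W` is trivial. So the rows `U ∩ (S × J)` give rank `≥ γ²|U|`.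
-/

open Kronecker

open Finset

lemma Finset.exists_subset_card_eq_mul_sum_le {ι : Type*} [DecidableEq ι] (f : ι → ℕ) {t : ℕ}
    {s : Finset ι} (hts : t ≤ #s) :
    ∃ S ⊆ s, #S = t ∧ t * ∑ i ∈ s, f i ≤ #s * ∑ i ∈ S, f i := by
  induction t generalizing s with
  | zero => exact ⟨∅, empty_subset _, card_empty, by simp⟩
  | succ t ih =>
    obtain ⟨i₀, hi₀, hmax⟩ := s.exists_max_image f (card_pos.mp (by omega))
    have hcard : #(s.erase i₀) = #s - 1 := card_erase_of_mem hi₀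
    obtain ⟨S, hS, hScard, hSsum⟩ := ih (s := s.erase i₀) (by omega)
    have hi₀S : i₀ ∉ S := fun h => (mem_erase.mp (hS h)).1 rfl
    have hrest : ∑ i ∈ s.erase i₀ \ S, f i ≤ (#s - 1 - t) * f i₀ := by
      rw [← hcard, ← hScard, ← card_sdiff_of_subset hS]
      simpa using sum_le_card_nsmul _ _ _ fun i hi => hmax i (mem_of_mem_erase (mem_sdiff.mp hi).1)
    refine ⟨insert i₀ S, insert_subset hi₀ (hS.trans (erase_subset _ _)),
      by rw [card_insert_of_notMem hi₀S, hScard], ?_⟩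
    rw [sum_insert hi₀S, ← add_sum_erase s f hi₀, ← sum_sdiff hS]
    rw [← sum_sdiff hS, hcard] at hSsum
    obtain ⟨e, he⟩ : ∃ e, #s = t + 1 + e := ⟨#s - (t + 1), by omega⟩
    rw [he] at hrest hSsum ⊢
    rw [show t + 1 + e - 1 - t = e by omega] at hrest
    rw [show t + 1 + e - 1 = t + e by omega] at hSsum
    nlinarith

lemma Finset.exists_card_eq_mul_card_le_card_filter {X α : Type*} [Fintype α] [DecidableEq α]
    (U : Finset X) (g : X → α) {t : ℕ} (ht : t ≤ Fintype.card α) :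
    ∃ S : Finset α, #S = t ∧ t * #U ≤ Fintype.card α * #{x ∈ U | g x ∈ S} := by
  obtain ⟨S, -, hS, hsum⟩ :=
    exists_subset_card_eq_mul_sum_le (fun a => #{x ∈ U | g x = a}) (s := univ) (by simpa using ht)
  refine ⟨S, hS, ?_⟩
  simpa [sum_card_fiberwise_eq_card_filter] using hsum

lemma Finset.exists_card_eq_card_eq_mul_card_le_card_filter_mem_product {α β : Type*}
    [Fintype α] [Fintype β] [DecidableEq α] [DecidableEq β] (U : Finset (α × β)) {s t : ℕ}
    (hs : s ≤ Fintype.card α) (ht : t ≤ Fintype.card β) :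
    ∃ (S : Finset α) (J : Finset β), #S = s ∧ #J = t ∧
      s * t * #U ≤ Fintype.card α * Fintype.card β * #{p ∈ U | p ∈ S ×ˢ J} := by
  obtain ⟨S, hS, hSU⟩ := exists_card_eq_mul_card_le_card_filter U Prod.fst hs
  obtain ⟨J, hJ, hJU⟩ := exists_card_eq_mul_card_le_card_filter {p ∈ U | p.1 ∈ S} Prod.snd ht
  refine ⟨S, J, hS, hJ, ?_⟩
  simp only [filter_filter, ← mem_product] at hJU
  calc s * t * #U = t * (s * #U) := by ring
    _ ≤ t * (Fintype.card α * #{p ∈ U | p.1 ∈ S}) := by gcongr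
    _ = Fintype.card α * (t * #{p ∈ U | p.1 ∈ S}) := by ring
    _ ≤ Fintype.card α * (Fintype.card β * #{p ∈ U | p ∈ S ×ˢ J}) := by gcongr
    _ = _ := by ring

lemma Finset.card_filter_le_card_fiber_lt {α β : Type*} [Fintype α] [DecidableEq α]
    (W : Finset (α × β)) {t : ℕ} (hW : #W < t * t) : #{c | t ≤ #{p ∈ W | p.1 = c}} < t := by
  set heavy : Finset α := {c | t ≤ #{p ∈ W | p.1 = c}}
  have h : t * #heavy ≤ #W :=
    calc t * #heavy ≤ #{p ∈ W | p.1 ∈ heavy} :=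
          mul_card_image_le_card_of_maps_to (fun p hp => (mem_filter.mp hp).2) t fun c hc =>
            (mem_filter.mp hc).2.trans_eq <| congrArg card <| by ext p; grind
      _ ≤ #W := card_filter_le _ _
  by_contra! h'
  nlinarith

section LinearAlgebra

variable {F : Type*} [Field F]

lemma Matrix.linearIndependent_row_of_card_le_rank {m n : Type*} [Fintype m] [Fintype n]
    {M : Matrix m n F} (h : Fintype.card m ≤ M.rank) : LinearIndependent F M.row := by
  rw [linearIndependent_iff_card_le_finrank_span, Set.finrank, ← M.rank_eq_finrank_span_row]
  exact h

lemma Rigid.linearIndependent_row_submatrix {ι κ : Type*} [Fintype ι] [Fintype κ]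
    [DecidableEq ι] [DecidableEq κ] {A : Matrix ι κ F} {t : ℕ} (hA : Rigid A t t 1)
    (ht : t ≤ Fintype.card ι) {I : Finset ι} (hI : #I ≤ t) {W : Finset κ} (hW : #W < t) :
    LinearIndependent F (A.submatrix (fun i : I => (i : ι)) (fun j : ↥Wᶜ => (j : κ))).row := by
  obtain ⟨I', hII', -, hI'⟩ := exists_subsuperset_card_eq (subset_univ I) hI (by simpa using ht)
  have hrank := hA I' hI' W hW
  rw [one_mul, Nat.ceil_natCast] at hrank
  have hind : LinearIndependent F
      (A.submatrix (fun i : I' => (i : ι)) (fun j : ↥Wᶜ => (j : κ))).row :=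
    Matrix.linearIndependent_row_of_card_le_rank (by simpa [hI'] using hrank)
  exact hind.comp (Set.inclusion hII') (Set.inclusion_injective hII')

lemma Matrix.linearIndependent_row_submatrix_kronecker {ι κ ι' κ' : Type*}
    (A : Matrix ι κ F) (B : Matrix ι' κ' F) (I : Finset ι) (J : Finset ι') (C : Finset κ)
    (D : κ → Finset κ') (X : Finset (κ × κ')) {P : Finset (ι × ι')} (hP : P ⊆ I ×ˢ J)
    (hDX : ∀ c ∈ C, ∀ d ∈ D c, (c, d) ∈ X)
    (hA : LinearIndependent F (A.submatrix (fun i : I => (i : ι)) (fun c : C => (c : κ))).row)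
    (hB : ∀ c ∈ C,
      LinearIndependent F (B.submatrix (fun j : J => (j : ι')) (fun d : D c => (d : κ'))).row) :
    LinearIndependent F ((A ⊗ₖ B).submatrix (fun p : P => (p : ι × ι'))
      (fun q : X => (q : κ × κ'))).row := by
  suffices h : LinearIndependent F ((A ⊗ₖ B).submatrix (fun p : I × J => ((p.1 : ι), (p.2 : ι')))
      (fun q : X => (q : κ × κ'))).row by
    let f : P → I × J := fun p =>
      (⟨p.1.1, (mem_product.mp (hP p.2)).1⟩, ⟨p.1.2, (mem_product.mp (hP p.2)).2⟩)
    have hf : Function.Injective f := by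
      rintro ⟨⟨a, b⟩, hab⟩ ⟨⟨c, d⟩, hcd⟩ h
      simp only [f, Prod.mk.injEq, Subtype.mk.injEq] at h
      simp [h]
    exact h.comp f hf
  rw [Fintype.linearIndependent_iff] at hA ⊢
  intro g hg
  have hcol : ∀ c ∈ C, ∀ d ∈ D c, ∑ j : J, (∑ i : I, g (i, j) * A i c) * B j d = 0 := by
    intro c hc d hd
    have hgcd := congrFun hg ⟨(c, d), hDX c hc d hd⟩
    simp only [Fintype.sum_prod_type, Finset.sum_apply, Pi.smul_apply, smul_eq_mul,
      Pi.zero_apply] at hgcd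
    rw [sum_comm] at hgcd
    simpa [Matrix.row, Matrix.kroneckerMap_apply, sum_mul, mul_assoc] using hgcd
  have hAcomb : ∀ j : J, ∀ c ∈ C, ∑ i : I, g (i, j) * A i c = 0 := by
    intro j c hc
    refine Fintype.linearIndependent_iff.mp (hB c hc) (fun j => ∑ i : I, g (i, j) * A i c) ?_ j
    funext d
    simpa [Matrix.row] using hcol c hc d d.2
  rintro ⟨i, j⟩
  refine hA (fun i => g (i, j)) ?_ i
  funext c
  simpa [Matrix.row] using hAcomb j c c.2

lemma Matrix.card_le_rank_submatrix_of_subset {ι κ : Type*} [Fintype κ] {M : Matrix ι κ F}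
    {U P : Finset ι} (hPU : P ⊆ U)
    (hP : LinearIndependent F (M.submatrix (fun i : P => (i : ι)) id).row) :
    #P ≤ (M.submatrix (fun i : U => (i : ι)) id).rank := by
  calc #P = (M.submatrix (fun i : P => (i : ι)) id).rank := by
        rw [hP.rank_matrix, Fintype.card_coe]
    _ ≤ _ := (M.submatrix (fun i : U => (i : ι)) id).rank_submatrix_le (Set.inclusion hPU) id

end LinearAlgebra

/-- If `γ ∈ (0,1/2)` and `A`, `B` are `(γn, γn)`-rigid `n×n` matrices over a field, then
the Kronecker product `A ⊗ B` is `(γ²n², γ²n², γ²)`-rigid. -/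
theorem stmt4 {F : Type*} [Field F] {n : ℕ} {γ : ℝ} (hγ0 : 0 < γ) (hγ1 : γ < 1 / 2)
    (A B : Matrix (Fin n) (Fin n) F)
    (hA : Rigid A ⌈γ * (n : ℝ)⌉₊ ⌈γ * (n : ℝ)⌉₊ 1)
    (hB : Rigid B ⌈γ * (n : ℝ)⌉₊ ⌈γ * (n : ℝ)⌉₊ 1) :
    Rigid (A ⊗ₖ B) ⌈γ ^ 2 * (n : ℝ) ^ 2⌉₊ ⌈γ ^ 2 * (n : ℝ) ^ 2⌉₊ (γ ^ 2) := by
  classical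
  intro U hU W hW
  set t := ⌈γ * (n : ℝ)⌉₊
  set k := ⌈γ ^ 2 * (n : ℝ) ^ 2⌉₊ with hk
  have hγt : γ * n ≤ t := Nat.le_ceil _
  have htn : t ≤ Fintype.card (Fin n) := by
    rw [Fintype.card_fin]
    exact Nat.ceil_le.mpr (by nlinarith)
  have hkt : k ≤ t * t := Nat.ceil_le.mpr <| by
    push_cast; nlinarith [mul_self_le_mul_self (by positivity : 0 ≤ γ * n) hγt]
  obtain ⟨S, J, hS, hJ, hSJ⟩ := exists_card_eq_card_eq_mul_card_le_card_filter_mem_product U htn htn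
  set P := {p ∈ U | p ∈ S ×ˢ J}
  set heavy : Finset (Fin n) := {c | t ≤ #{p ∈ W | p.1 = c}}
  have hheavy : #heavy < t := card_filter_le_card_fiber_lt W (hW.trans_le hkt)
  have hP : LinearIndependent F ((A ⊗ₖ B).submatrix (fun p : P => (p : Fin n × Fin n))
      (fun q : ↥Wᶜ => (q : Fin n × Fin n))).row := by
    refine Matrix.linearIndependent_row_submatrix_kronecker A B S J heavyᶜ
      (fun c => ({p ∈ W | p.1 = c}.image Prod.snd)ᶜ) Wᶜ (fun p hp => (mem_filter.mp hp).2)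
      (fun c _ d hd => ?_) (hA.linearIndependent_row_submatrix htn hS.le hheavy)
      fun c hc => hB.linearIndependent_row_submatrix htn hJ.le ?_
    · simpa using hd
    · exact card_image_le.trans_lt (not_le.mp (by simpa [heavy] using hc))
  have hdense : γ ^ 2 * k ≤ #P := by
    rcases n.eq_zero_or_pos with hn | hn
    · simp [hk, hn]
    rw [Fintype.card_fin, hU] at hSJ
    refine le_of_mul_le_mul_left ?_ (by positivity : (0 : ℝ) < n * n)
    calc (n : ℝ) * n * (γ ^ 2 * k) = γ * n * (γ * n) * k := by ring
      _ ≤ t * t * k := by gcongr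
      _ ≤ n * n * #P := by exact_mod_cast hSJ
  calc ⌈γ ^ 2 * (k : ℝ)⌉₊ ≤ #P := Nat.ceil_le.mpr hdense
    _ ≤ _ := Matrix.card_le_rank_submatrix_of_subset
      (M := (A ⊗ₖ B).submatrix id (fun q : ↥Wᶜ => (q : Fin n × Fin n))) (filter_subset _ U) hP
end

section
/- For every integer L ≥ 1, the set E = {(i,j) ∈ [L]×[L] : i ≤ j} (the diagonal and upper-triangular part of an L×L grid), which has |E| = L(L+1)/2, requires at least L colors in any valid L'-coloring; in particular L(k) ≥ √(2k) where k = L(L+1)/2. -/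
/-- A valid coloring of `E ⊆ [n]×[n]` with colors `{0,…,L−1}`: every point of `E` gets a
color `< L`; within each color class either all rows are distinct or all columns are
distinct; and for every `(i,j) ∈ E` there are no `i' ≠ i`, `j' ≠ j` with `(i,j')` and
`(i',j)` both in `E` sharing a color. -/
def ValidColoring (n L : ℕ) (E : Finset (Fin n × Fin n)) (χ : Fin n × Fin n → ℕ) : Prop :=
  (∀ p ∈ E, χ p < L) ∧
  (∀ ℓ : ℕ,
    (∀ p ∈ E, ∀ q ∈ E, χ p = ℓ → χ q = ℓ → p ≠ q → p.1 ≠ q.1) ∨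
    (∀ p ∈ E, ∀ q ∈ E, χ p = ℓ → χ q = ℓ → p ≠ q → p.2 ≠ q.2)) ∧
  (∀ p ∈ E, ∀ i' j', (i', p.2) ∈ E → (p.1, j') ∈ E →
    χ (i', p.2) = χ (p.1, j') → i' ≠ p.1 → j' ≠ p.2 → False)

/-- The diagonal-plus-upper-triangular set `E = {(i,j) : i ≤ j}` in an `L×L` grid has
`L(L+1)/2` elements and requires at least `L` colors in any valid coloring. -/
theorem stmt8 (L : ℕ) (hL : 1 ≤ L) :
    (Finset.univ.filter (fun p : Fin L × Fin L => p.1 ≤ p.2)).card = L * (L + 1) / 2 ∧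
    ∀ (L' : ℕ) (χ : Fin L × Fin L → ℕ),
      ValidColoring L L' (Finset.univ.filter (fun p : Fin L × Fin L => p.1 ≤ p.2)) χ →
      L ≤ L' := by
  constructor
  · have h := Finset.card_eq_sum_card_fiberwise
      (f := fun p : Fin L × Fin L => p.2)
      (s := Finset.univ.filter (fun p : Fin L × Fin L => p.1 ≤ p.2))
      (t := Finset.univ) (fun x _ => Finset.mem_univ _)
    rw [h]
    have h2 : ∀ j : Fin L,
        ((Finset.univ.filter (fun p : Fin L × Fin L => p.1 ≤ p.2)).filter
          (fun p => p.2 = j)).card = (j : ℕ) + 1 := by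
      intro j
      have : ((Finset.univ.filter (fun p : Fin L × Fin L => p.1 ≤ p.2)).filter
          (fun p => p.2 = j)) = (Finset.Iic j).image (fun i => (i, j)) := by
        ext p
        simp only [Finset.mem_filter, Finset.mem_univ, true_and, Finset.mem_image,
          Finset.mem_Iic]
        constructor
        · rintro ⟨h1, h2⟩; exact ⟨p.1, by rwa [h2] at h1, by rw [← h2]⟩
        · rintro ⟨i, hi, rfl⟩; exact ⟨hi, rfl⟩
      rw [this, Finset.card_image_of_injective _ (fun a b h => by simpa using h)]
      exact Fin.card_Iic j
    simp only [h2]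
    rw [Fin.sum_univ_eq_sum_range (fun j => j + 1)]
    have : ∑ j ∈ Finset.range L, (j + 1) = ∑ i ∈ Finset.range (L + 1), i := by
      rw [Finset.sum_range_succ' (fun i => i) L]; simp
    rw [this, Finset.sum_range_id]
    simp [Nat.mul_comm]
  · rintro L' χ ⟨h1, h2, h3⟩
    set E := Finset.univ.filter (fun p : Fin L × Fin L => p.1 ≤ p.2)
    have hdiag : ∀ i : Fin L, (i, i) ∈ E := fun i => by simp [E]
    have hinj : Function.Injective (fun i : Fin L => χ (i, i)) := by
      intro i j hij
      by_contra hne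
      rcases lt_or_gt_of_ne (fun h : i = j => hne h) with h | h
      · exact h3 (i, j) (by simp [E, h.le]) j i (hdiag j) (hdiag i)
          (by simpa using hij.symm) (Fin.ne_of_gt h) (Fin.ne_of_lt h)
      · exact h3 (j, i) (by simp [E, h.le]) i j (hdiag i) (hdiag j)
          (by simpa using hij) (Fin.ne_of_gt h) (Fin.ne_of_lt h)
    have : (Finset.univ : Finset (Fin L)).card ≤ (Finset.range L').card :=
      Finset.card_le_card_of_injOn (fun i => χ (i, i))
        (fun i _ => Finset.mem_range.mpr (h1 _ (hdiag i)))
        (fun a _ b _ h => hinj h)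
    simpa using this
end

section
/- Every set E ⊆ [n]×[n] with |E| = k admits a valid coloring using at most √(3/2)·k^{2/3} colors; that is, L(k) ≤ √(3/2)·k^{2/3}. -/
open Finset

namespace SimpleGraph

variable {V : Type*} (G : SimpleGraph V)

theorem Coloring.exists_adj_of_not_colorable_pred {x : ℕ} (C : G.Coloring (Fin x))
    (hx : ¬ G.Colorable (x - 1)) {a b : Fin x} (hab : a ≠ b) :
    ∃ u v, G.Adj u v ∧ C u = a ∧ C v = b := by
  by_contra! hno
  -- merging the colour class `b` into `a` would give a colouring with `x - 1` colours
  let C' : G.Coloring {c : Fin x // c ≠ b} :=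
    Coloring.mk (fun v => if h : C v = b then ⟨a, hab⟩ else ⟨C v, h⟩) fun {u v} huv => by
      have := C.valid huv
      have := hno u v huv
      have := hno v u huv.symm
      split_ifs <;> grind
  exact hx (by simpa using C'.colorable)

theorem exists_colorable_mul_pred_le_sum_degree [Fintype V] [DecidableRel G.Adj] :
    ∃ x, G.Colorable x ∧ x * (x - 1) ≤ ∑ v, G.degree v := by
  classical
  have hex : ∃ x, G.Colorable x := ⟨_, G.colorable_of_fintype⟩
  refine ⟨Nat.find hex, Nat.find_spec hex, ?_⟩
  obtain h0 | hpos := (Nat.find hex).eq_zero_or_pos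
  · simp [h0]
  obtain ⟨C⟩ := Nat.find_spec hex
  have hmin : ¬ G.Colorable (Nat.find hex - 1) := Nat.find_min hex (by omega)
  have hsurj : Set.SurjOn (fun d : G.Dart => (C d.fst, C d.snd)) (univ : Finset G.Dart)
      (univ : Finset (Fin (Nat.find hex))).offDiag := by
    rintro ⟨a, b⟩ hab
    simp only [coe_offDiag, coe_univ, Set.offDiag_univ, Set.mem_compl_iff,
      Set.mem_diagonal_iff] at hab
    obtain ⟨u, v, huv, rfl, rfl⟩ := C.exists_adj_of_not_colorable_pred G hmin hab
    exact ⟨⟨(u, v), huv⟩, by simp, rfl⟩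
  have := card_le_card_of_surjOn _ hsurj
  rwa [offDiag_card, card_univ, Fintype.card_fin, card_univ, dart_card_eq_sum_degrees,
    ← Nat.mul_sub_one] at this

end SimpleGraph

section RowConflictGraph

variable {α β : Type*}

def rowConflictGraph (F : Finset (α × β)) : SimpleGraph α where
  Adj i i' := i ≠ i' ∧ ∃ j, (i, j) ∈ F ∧ (i', j) ∈ F
  symm := ⟨fun _ _ ⟨hne, j, h, h'⟩ => ⟨hne.symm, j, h', h⟩⟩
  loopless := ⟨fun _ h => h.1 rfl⟩

variable [DecidableEq α] [DecidableEq β] [Fintype β] (F : Finset (α × β))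

instance : DecidableRel (rowConflictGraph F).Adj := fun i i' =>
  inferInstanceAs (Decidable (i ≠ i' ∧ ∃ j, (i, j) ∈ F ∧ (i', j) ∈ F))

variable [Fintype α]

theorem rowConflictGraph_degree_le {d : ℕ} (hcol : ∀ j, #{p ∈ F | p.2 = j} ≤ d + 1) (i : α) :
    (rowConflictGraph F).degree i ≤ #{p ∈ F | p.1 = i} * d := by
  have hsub : (rowConflictGraph F).neighborFinset i ⊆
      {p ∈ F | p.1 = i}.biUnion fun p => ({q ∈ F | q.2 = p.2}.erase p).image Prod.fst := by
    intro i' hi'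
    obtain ⟨hne, j, hij, hi'j⟩ := (SimpleGraph.mem_neighborFinset _ _ _).1 hi'
    simp only [mem_biUnion, mem_filter, mem_image, mem_erase]
    exact ⟨(i, j), ⟨hij, rfl⟩, (i', j), ⟨by simpa using hne.symm, hi'j, rfl⟩, rfl⟩
  calc (rowConflictGraph F).degree i
      ≤ ∑ p ∈ {p ∈ F | p.1 = i}, #(({q ∈ F | q.2 = p.2}.erase p).image Prod.fst) :=
        (card_le_card hsub).trans card_biUnion_le
    _ ≤ ∑ _p ∈ {p ∈ F | p.1 = i}, d := by
        refine sum_le_sum fun p hp => card_image_le.trans ?_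
        rw [card_erase_of_mem (by simp_all)]
        exact Nat.sub_le_of_le_add (hcol p.2)
    _ = #{p ∈ F | p.1 = i} * d := by rw [sum_const, smul_eq_mul]

theorem sum_rowConflictGraph_degree_le {d : ℕ} (hcol : ∀ j, #{p ∈ F | p.2 = j} ≤ d + 1) :
    ∑ i, (rowConflictGraph F).degree i ≤ #F * d := by
  calc ∑ i, (rowConflictGraph F).degree i ≤ ∑ i, #{p ∈ F | p.1 = i} * d :=
        sum_le_sum fun i _ => rowConflictGraph_degree_le F hcol i
    _ = #F * d := by
        rw [← sum_mul, ← card_eq_sum_card_fiberwise (fun _ _ => mem_coe.2 (mem_univ _))]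

end RowConflictGraph

section ValidColoring

variable {n L : ℕ} {F : Finset (Fin n × Fin n)}

theorem validColoring_empty (χ : Fin n × Fin n → ℕ) : ValidColoring n L ∅ χ :=
  ⟨by simp, fun _ => Or.inl (by simp), by simp⟩

theorem validColoring_of_coloring (C : (rowConflictGraph F).Coloring (Fin L)) :
    ValidColoring n L F (fun p => C p.1) := by
  refine ⟨fun p _ => (C p.1).isLt, fun _ => Or.inr ?_, ?_⟩
  · intro p hp q hq hpℓ hqℓ hpq hcol
    have hrow : p.1 ≠ q.1 := fun h => hpq (Prod.ext h hcol)
    exact C.valid ⟨hrow, p.2, hp, hcol ▸ hq⟩ (Fin.ext (hpℓ.trans hqℓ.symm))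
  · intro p hp i' j' hi' _ hcolor hne _
    exact C.valid ⟨hne, p.2, hi', hp⟩ (Fin.ext hcolor)

theorem ValidColoring.extend_column {χ : Fin n × Fin n → ℕ} (c : Fin n)
    (h : ValidColoring n L {p ∈ F | p.2 ≠ c} χ) :
    ValidColoring n (L + 1) F (fun p => if p.2 = c then L else χ p) := by
  obtain ⟨hlt, hclass, hrect⟩ := h
  have hmem : ∀ p ∈ F, p.2 ≠ c → p ∈ {p ∈ F | p.2 ≠ c} := fun p hp hc => by simp [hp, hc]
  have hnew : ∀ p ∈ F, ((if p.2 = c then L else χ p) = L ↔ p.2 = c) := fun p hp => by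
    by_cases hc : p.2 = c
    · simp [hc]
    · simp [hc, (hlt p (hmem p hp hc)).ne]
  have hold : ∀ p ∈ F, ∀ ℓ, (if p.2 = c then L else χ p) = ℓ → ℓ ≠ L →
      p ∈ {p ∈ F | p.2 ≠ c} ∧ χ p = ℓ := fun p hp ℓ hpℓ hℓ => by
    by_cases hc : p.2 = c <;> simp_all
  refine ⟨fun p hp => ?_, fun ℓ => ?_, fun p hp i' j' h1 h2 heq hi hj => ?_⟩
  · by_cases hc : p.2 = c
    · simp [hc]
    · simp [hc, Nat.lt_succ_of_lt (hlt p (hmem p hp hc))]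
  · by_cases hℓ : ℓ = L
    · subst hℓ
      exact Or.inl fun p hp q hq hpℓ hqℓ hpq hrow =>
        hpq (Prod.ext hrow (((hnew p hp).1 hpℓ).trans ((hnew q hq).1 hqℓ).symm))
    · refine (hclass ℓ).imp (fun hrows p hp q hq hpℓ hqℓ => ?_) (fun hcols p hp q hq hpℓ hqℓ => ?_)
      · exact hrows p (hold p hp ℓ hpℓ hℓ).1 q (hold q hq ℓ hqℓ hℓ).1
          (hold p hp ℓ hpℓ hℓ).2 (hold q hq ℓ hqℓ hℓ).2
      · exact hcols p (hold p hp ℓ hpℓ hℓ).1 q (hold q hq ℓ hqℓ hℓ).1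
          (hold p hp ℓ hpℓ hℓ).2 (hold q hq ℓ hqℓ hℓ).2
  · set ℓ := if (i', p.2).2 = c then L else χ (i', p.2)
    by_cases hℓ : ℓ = L
    · have hc : p.2 = c := (hnew _ h1).1 hℓ
      exact hj (((hnew _ h2).1 (heq.symm.trans hℓ)).trans hc.symm)
    · obtain ⟨h1', hχ1⟩ := hold _ h1 ℓ rfl hℓ
      obtain ⟨h2', hχ2⟩ := hold _ h2 ℓ heq.symm hℓ
      exact hrect p (hmem p hp (mem_filter.1 h1').2) i' j' h1' h2' (hχ1.trans hχ2.symm) hi hj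

theorem exists_validColoring_mul_pred_le {d : ℕ} (hcol : ∀ c, #{p ∈ F | p.2 = c} ≤ d + 1) :
    ∃ (L : ℕ) (χ : Fin n × Fin n → ℕ), ValidColoring n L F χ ∧ L * (L - 1) ≤ #F * d := by
  obtain ⟨L, ⟨C⟩, hL⟩ := (rowConflictGraph F).exists_colorable_mul_pred_le_sum_degree
  exact ⟨L, _, validColoring_of_coloring C, hL.trans (sum_rowConflictGraph_degree_le F hcol)⟩

end ValidColoring

theorem sqrt_three_halves_mul_sq_add_one_le {z y : ℝ} (hz : 0 < z) (hy : 0 ≤ y)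
    (h : y ^ 3 ≤ z ^ 3 - √(3 / 2) * z) : √(3 / 2) * y ^ 2 + 1 ≤ √(3 / 2) * z ^ 2 := by
  set s := √(3 / 2)
  have hs : s ^ 2 = 3 / 2 := Real.sq_sqrt (by norm_num)
  have hs0 : 0 ≤ s := Real.sqrt_nonneg _
  have hzs : s ≤ z ^ 2 := by nlinarith [pow_nonneg hy 3]
  -- since `s * (2 * s / 3) = 1`, it suffices to show `y ^ 2 ≤ z ^ 2 - 2 * s / 3`
  suffices hy2 : y ^ 2 ≤ z ^ 2 - 2 * s / 3 by nlinarith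
  by_contra! hlt
  have key : (z ^ 3 - s * z) ^ 2 = (z ^ 2 - 2 * s / 3) ^ 3 - (z ^ 2 / 2 - 4 * s / 9) := by
    linear_combination (-(1 / 3) * z ^ 2 + 8 * s / 27) * hs
  have h1 : (z ^ 2 - 2 * s / 3) ^ 3 < (y ^ 2) ^ 3 :=
    pow_lt_pow_left₀ hlt (by nlinarith) (by norm_num)
  have h2 : (y ^ 3) ^ 2 ≤ (z ^ 3 - s * z) ^ 2 := pow_le_pow_left₀ (pow_nonneg hy 3) h 2
  nlinarith

theorem le_sqrt_three_halves_mul_sq_of_mul_sub_one_le {z x : ℝ} (hz : 1 ≤ z)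
    (h : x * (x - 1) ≤ z ^ 3 * (√(3 / 2) * z - 1)) : x ≤ √(3 / 2) * z ^ 2 := by
  set s := √(3 / 2)
  have hs : s ^ 2 = 3 / 2 := Real.sq_sqrt (by norm_num)
  have hs1 : 1 ≤ s := by nlinarith [Real.sqrt_nonneg (3 / 2 : ℝ)]
  have hs5 : s ≤ 5 / 4 := by nlinarith
  by_contra! hlt
  have hy : z ^ 3 * (s * z - 1) ≤ s * z ^ 2 * (s * z ^ 2 - 1) := by
    have hpos : 0 ≤ (3 / 2 - s) * z ^ 2 + z - s := by nlinarith
    have hdiff : s * z ^ 2 * (s * z ^ 2 - 1) - z ^ 3 * (s * z - 1) =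
        z ^ 2 * ((3 / 2 - s) * z ^ 2 + z - s) := by
      linear_combination z ^ 4 * hs
    nlinarith [mul_nonneg (sq_nonneg z) hpos]
  have hz2 : 1 ≤ s * z ^ 2 := by nlinarith
  nlinarith [mul_pos (sub_pos.2 hlt) (by linarith : 0 < x + s * z ^ 2 - 1)]

theorem rpow_one_third_pow_three {x : ℝ} (hx : 0 ≤ x) : (x ^ ((1 : ℝ) / 3)) ^ 3 = x := by
  rw [← Real.rpow_natCast, ← Real.rpow_mul hx]; norm_num

theorem rpow_two_thirds_eq_sq {x : ℝ} (hx : 0 ≤ x) :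
    x ^ ((2 : ℝ) / 3) = (x ^ ((1 : ℝ) / 3)) ^ 2 := by
  rw [← Real.rpow_natCast, ← Real.rpow_mul hx]; norm_num

theorem exists_validColoring_le_of_card_column_lt {n : ℕ} {F : Finset (Fin n × Fin n)} {z : ℝ}
    (hz1 : 1 ≤ z) (hz3 : z ^ 3 = #F) (hcol : ∀ c, #{p ∈ F | p.2 = c} < ⌈√(3 / 2) * z⌉₊) :
    ∃ (L : ℕ) (χ : Fin n × Fin n → ℕ), ValidColoring n L F χ ∧ (L : ℝ) ≤ √(3 / 2) * z ^ 2 := by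
  set t := ⌈√(3 / 2) * z⌉₊
  obtain ⟨L, χ, hχ, hL⟩ := exists_validColoring_mul_pred_le (F := F) (d := t - 2) fun c => by
    have := hcol c; omega
  refine ⟨L, χ, hχ, le_sqrt_three_halves_mul_sq_of_mul_sub_one_le hz1 ?_⟩
  have hL' : (L : ℝ) * (L - 1) ≤ ((L * (L - 1) : ℕ) : ℝ) := by
    rcases L.eq_zero_or_pos with rfl | hL0
    · simp
    · rw [Nat.cast_mul, Nat.cast_pred hL0]
  have ht2 : ((t - 2 : ℕ) : ℝ) ≤ √(3 / 2) * z - 1 := by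
    have hs1 : 1 ≤ √(3 / 2) := Real.one_le_sqrt.2 (by norm_num)
    rcases le_or_gt 2 t with h2 | h2
    · have : (t : ℝ) < √(3 / 2) * z + 1 := Nat.ceil_lt_add_one (by positivity)
      rw [Nat.cast_sub h2]
      push_cast
      linarith
    · rw [Nat.sub_eq_zero_of_le h2.le, Nat.cast_zero]
      nlinarith
  calc (L : ℝ) * (L - 1) ≤ ((#F * (t - 2) : ℕ) : ℝ) := hL'.trans (by exact_mod_cast hL)
    _ = z ^ 3 * ((t - 2 : ℕ) : ℝ) := by rw [Nat.cast_mul, hz3]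
    _ ≤ z ^ 3 * (√(3 / 2) * z - 1) := mul_le_mul_of_nonneg_left ht2 (by positivity)

theorem exists_validColoring_le_sqrt_three_halves_mul {n : ℕ} (F : Finset (Fin n × Fin n)) :
    ∃ (L : ℕ) (χ : Fin n × Fin n → ℕ),
      ValidColoring n L F χ ∧ (L : ℝ) ≤ √(3 / 2) * (#F : ℝ) ^ ((2 : ℝ) / 3) := by
  induction F using Finset.strongInduction with
  | H F ih =>
  obtain rfl | hF := F.eq_empty_or_nonempty
  · exact ⟨0, fun _ => 0, validColoring_empty _, by simp⟩
  set z := (#F : ℝ) ^ ((1 : ℝ) / 3)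
  have hz3 : z ^ 3 = #F := rpow_one_third_pow_three (Nat.cast_nonneg _)
  have hz1 : 1 ≤ z := Real.one_le_rpow (by exact_mod_cast hF.card_pos) (by norm_num)
  rw [rpow_two_thirds_eq_sq (Nat.cast_nonneg _)]
  set t := ⌈√(3 / 2) * z⌉₊
  by_cases hcol : ∃ c, t ≤ #{p ∈ F | p.2 = c}
  · obtain ⟨c, hc⟩ := hcol
    have ht : √(3 / 2) * z ≤ t := Nat.le_ceil _
    obtain ⟨p, hp⟩ := card_pos.1 ((Nat.ceil_pos.2 (by positivity)).trans_le hc)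
    obtain ⟨hpF, hpc⟩ := mem_filter.1 hp
    obtain ⟨L, χ, hχ, hL⟩ := ih {q ∈ F | q.2 ≠ c} (filter_ssubset.2 ⟨p, hpF, not_not.2 hpc⟩)
    refine ⟨L + 1, _, hχ.extend_column c, ?_⟩
    have hsplit : (#{p ∈ F | p.2 = c} : ℝ) + #{p ∈ F | p.2 ≠ c} = #F := by
      exact_mod_cast card_filter_add_card_filter_not (s := F) (fun p => p.2 = c)
    have hcR : (t : ℝ) ≤ #{p ∈ F | p.2 = c} := by exact_mod_cast hc
    have hstep := sqrt_three_halves_mul_sq_add_one_le (z := z)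
      (y := (#{p ∈ F | p.2 ≠ c} : ℝ) ^ ((1 : ℝ) / 3)) (by linarith) (by positivity)
      (by rw [rpow_one_third_pow_three (Nat.cast_nonneg _)]; linarith)
    rw [rpow_two_thirds_eq_sq (Nat.cast_nonneg _)] at hL
    push_cast
    linarith
  · simp only [not_exists, not_le] at hcol
    exact exists_validColoring_le_of_card_column_lt hz1 hz3 hcol

/-- Every set `E ⊆ [n]×[n]` with `|E| = k` admits a valid coloring with at most
`√(3/2)·k^{2/3}` colors. -/
theorem stmt9 {n k : ℕ} (E : Finset (Fin n × Fin n)) (hE : E.card = k) :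
    ∃ (L : ℕ) (χ : Fin n × Fin n → ℕ),
      ValidColoring n L E χ ∧
      (L : ℝ) ≤ Real.sqrt (3 / 2) * (k : ℝ) ^ ((2 : ℝ) / 3) := by
  subst hE
  exact exists_validColoring_le_sqrt_three_halves_mul E
end

section
/- If there exists a set E ⊆ [n]×[n] requiring at least L colors in any valid coloring, then there exists a set E' with |E'| = |E| requiring at least L colors in which every pair of rows of E' intersects and every pair of columns of E' intersects. -/
/-- `E` requires at least `L` colors: every valid coloring uses at least `L` colors. -/
def RequiresColors (n L : ℕ) (E : Finset (Fin n × Fin n)) : Prop :=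
  ∀ (L' : ℕ) (χ : Fin n × Fin n → ℕ), ValidColoring n L' E χ → L ≤ L'

namespace Stmt10Aux

variable {n : ℕ}

/-- Row-merging map: send row `i'` to row `i`. -/
def mg (i i' : Fin n) (p : Fin n × Fin n) : Fin n × Fin n :=
  if p.1 = i' then (i, p.2) else p

lemma mg_snd (i i' : Fin n) (p : Fin n × Fin n) : (mg i i' p).2 = p.2 := by
  unfold mg; split <;> rfl

lemma mg_fst_congr (i i' : Fin n) {p q : Fin n × Fin n} (h : p.1 = q.1) :
    (mg i i' p).1 = (mg i i' q).1 := by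
  unfold mg; split <;> split <;> simp_all

lemma mg_eta (i i' : Fin n) (p : Fin n × Fin n) : mg i i' p = ((mg i i' p).1, p.2) := by
  rw [← mg_snd i i' p]

lemma mg_ne {E : Finset (Fin n × Fin n)} {i i' : Fin n}
    (hni : ¬ ∃ j, (i, j) ∈ E ∧ (i', j) ∈ E)
    {p q : Fin n × Fin n} (hp : p ∈ E) (hq : q ∈ E) (hpq : p ≠ q) :
    mg i i' p ≠ mg i i' q := by
  intro he
  have hsnd : p.2 = q.2 := by rw [← mg_snd i i' p, ← mg_snd i i' q, he]
  have hfst : p.1 ≠ q.1 := fun h => hpq (Prod.ext h hsnd)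
  unfold mg at he
  split at he <;> split at he
  · rename_i h1 h2; exact hfst (h1.trans h2.symm)
  · rename_i h1 h2
    -- mg p = (i, p.2) = q, p.1 = i'
    have hq1 : q.1 = i := by rw [← he]
    have hq2 : q.2 = p.2 := by rw [← he]
    apply hni
    refine ⟨p.2, ?_, ?_⟩
    · have : q = (i, p.2) := Prod.ext hq1 hq2
      rwa [this] at hq
    · have : p = (i', p.2) := Prod.ext h1 rfl
      rwa [this] at hp
  · rename_i h1 h2
    have hp1 : p.1 = i := by rw [he]
    have hp2 : p.2 = q.2 := hsnd
    apply hni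
    refine ⟨p.2, ?_, ?_⟩
    · have : p = (i, p.2) := Prod.ext hp1 rfl
      rwa [this] at hp
    · have : q = (i', p.2) := Prod.ext h2 hp2.symm
      rwa [this] at hq
  · exact hpq he

lemma merge_valid {E : Finset (Fin n × Fin n)} {i i' : Fin n}
    (hni : ¬ ∃ j, (i, j) ∈ E ∧ (i', j) ∈ E)
    {L' : ℕ} {χ : Fin n × Fin n → ℕ}
    (h : ValidColoring n L' (E.image (mg i i')) χ) :
    ValidColoring n L' E (χ ∘ mg i i') := by
  obtain ⟨h1, h2, h3⟩ := h
  refine ⟨?_, ?_, ?_⟩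
  · intro p hp; exact h1 _ (Finset.mem_image_of_mem _ hp)
  · intro ℓ
    rcases h2 ℓ with h2 | h2
    · left
      intro p hp q hq hpℓ hqℓ hpq he
      exact h2 _ (Finset.mem_image_of_mem _ hp) _ (Finset.mem_image_of_mem _ hq)
        hpℓ hqℓ (mg_ne hni hp hq hpq) (mg_fst_congr i i' he)
    · right
      intro p hp q hq hpℓ hqℓ hpq he
      apply h2 _ (Finset.mem_image_of_mem _ hp) _ (Finset.mem_image_of_mem _ hq)
        hpℓ hqℓ (mg_ne hni hp hq hpq)
      rw [mg_snd, mg_snd, he]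
  · intro p hp i₁ j₁ h₁ h₂ hc hne1 hne2
    have hpe : p = (p.1, p.2) := rfl
    have hne : (i₁, p.2) ≠ p := fun h => hne1 (congrArg Prod.fst h)
    have hmne : mg i i' (i₁, p.2) ≠ mg i i' p := mg_ne hni h₁ hp hne
    have hfne : (mg i i' (i₁, p.2)).1 ≠ (mg i i' p).1 := by
      intro h
      apply hmne
      apply Prod.ext h
      rw [mg_snd, mg_snd]
    apply h3 (mg i i' p) (Finset.mem_image_of_mem _ hp) (mg i i' (i₁, p.2)).1 j₁
    · rw [mg_snd]
      have : ((mg i i' (i₁, p.2)).1, p.2) = mg i i' (i₁, p.2) := by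
        rw [mg_eta i i' (i₁, p.2)]
      rw [this]
      exact Finset.mem_image_of_mem _ h₁
    · have hfc : (mg i i' p).1 = (mg i i' (p.1, j₁)).1 := mg_fst_congr i i' rfl
      have : ((mg i i' p).1, j₁) = mg i i' (p.1, j₁) := by
        rw [hfc, mg_eta i i' (p.1, j₁)]
      rw [this]
      exact Finset.mem_image_of_mem _ h₂
    · have e1 : ((mg i i' (i₁, p.2)).1, (mg i i' p).2) = mg i i' (i₁, p.2) := by
        rw [mg_snd, mg_eta i i' (i₁, p.2)]
      have hfc : (mg i i' p).1 = (mg i i' (p.1, j₁)).1 := mg_fst_congr i i' rfl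
      have e2 : ((mg i i' p).1, j₁) = mg i i' (p.1, j₁) := by
        rw [hfc, mg_eta i i' (p.1, j₁)]
      rw [e1, e2]
      exact hc
    · exact hfne
    · rw [mg_snd]; exact hne2

def RowsInt (E : Finset (Fin n × Fin n)) : Prop :=
  ∀ i i' : Fin n, (∃ j, (i, j) ∈ E) → (∃ j, (i', j) ∈ E) →
    ∃ j, (i, j) ∈ E ∧ (i', j) ∈ E

def ColsInt (E : Finset (Fin n × Fin n)) : Prop :=
  ∀ j j' : Fin n, (∃ i, (i, j) ∈ E) → (∃ i, (i, j') ∈ E) →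
    ∃ i, (i, j) ∈ E ∧ (i, j') ∈ E

lemma merge_card {E : Finset (Fin n × Fin n)} {i i' : Fin n}
    (hni : ¬ ∃ j, (i, j) ∈ E ∧ (i', j) ∈ E) :
    (E.image (mg i i')).card = E.card :=
  Finset.card_image_of_injOn (fun p hp q hq h => by
    by_contra hne; exact mg_ne hni hp hq hne h)

lemma merge_requires {L : ℕ} {E : Finset (Fin n × Fin n)} {i i' : Fin n}
    (hni : ¬ ∃ j, (i, j) ∈ E ∧ (i', j) ∈ E)
    (hE : RequiresColors n L E) : RequiresColors n L (E.image (mg i i')) := by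
  intro L' χ h
  exact hE L' (χ ∘ mg i i') (merge_valid hni h)

lemma merge_rows_lt {E : Finset (Fin n × Fin n)} {i i' : Fin n}
    (hii : i ≠ i') (hi : ∃ j, (i, j) ∈ E) (hi' : ∃ j, (i', j) ∈ E) :
    ((E.image (mg i i')).image Prod.fst).card < (E.image Prod.fst).card := by
  have hi'mem : i' ∈ E.image Prod.fst := by
    obtain ⟨j, hj⟩ := hi'
    exact Finset.mem_image_of_mem _ hj
  have hsub : (E.image (mg i i')).image Prod.fst ⊆ (E.image Prod.fst).erase i' := by
    intro x hx
    rw [Finset.image_image] at hx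
    obtain ⟨p, hp, hpx⟩ := Finset.mem_image.mp hx
    simp only [Function.comp] at hpx
    rw [Finset.mem_erase]
    unfold mg at hpx
    split at hpx
    · have hx : x = i := by simpa using hpx.symm
      subst hx
      obtain ⟨j, hj⟩ := hi
      exact ⟨hii, Finset.mem_image_of_mem _ hj⟩
    · rename_i hpi
      subst hpx
      exact ⟨hpi, Finset.mem_image_of_mem _ hp⟩
  calc ((E.image (mg i i')).image Prod.fst).card
      ≤ ((E.image Prod.fst).erase i').card := Finset.card_le_card hsub
    _ < (E.image Prod.fst).card := Finset.card_erase_lt_of_mem hi'mem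

lemma merge_colsInt {E : Finset (Fin n × Fin n)} {i i' : Fin n}
    (h : ColsInt E) : ColsInt (E.image (mg i i')) := by
  intro c c' hc hc'
  have hcol : ∀ c₀ : Fin n, (∃ a, (a, c₀) ∈ E.image (mg i i')) → ∃ a, (a, c₀) ∈ E := by
    intro c₀ ⟨a, ha⟩
    obtain ⟨p, hp, hpe⟩ := Finset.mem_image.mp ha
    have : p.2 = c₀ := by rw [← mg_snd i i' p, hpe]
    exact ⟨p.1, by rwa [← this, Prod.mk.eta]⟩
  obtain ⟨a, ha, ha'⟩ := h c c' (hcol c hc) (hcol c' hc')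
  refine ⟨(mg i i' (a, c)).1, ?_, ?_⟩
  · have : ((mg i i' (a, c)).1, c) = mg i i' (a, c) := (mg_eta i i' (a, c)).symm
    rw [this]; exact Finset.mem_image_of_mem _ ha
  · have hfc : (mg i i' (a, c)).1 = (mg i i' (a, c')).1 := mg_fst_congr i i' rfl
    have : ((mg i i' (a, c)).1, c') = mg i i' (a, c') := by
      rw [hfc]; exact (mg_eta i i' (a, c')).symm
    rw [this]; exact Finset.mem_image_of_mem _ ha'

lemma mem_swap {E : Finset (Fin n × Fin n)} {p : Fin n × Fin n} :
    p ∈ E.image Prod.swap ↔ p.swap ∈ E := by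
  constructor
  · intro h
    obtain ⟨q, hq, hqe⟩ := Finset.mem_image.mp h
    rw [← hqe, Prod.swap_swap]; exact hq
  · intro h
    have : p = p.swap.swap := (Prod.swap_swap p).symm
    rw [this]; exact Finset.mem_image_of_mem _ h

lemma swap_swap_image (E : Finset (Fin n × Fin n)) :
    (E.image Prod.swap).image Prod.swap = E := by
  rw [Finset.image_image]
  have : (Prod.swap ∘ Prod.swap : Fin n × Fin n → Fin n × Fin n) = id := by
    funext p; simp
  rw [this, Finset.image_id]

lemma valid_swap {L' : ℕ} {E : Finset (Fin n × Fin n)} {χ : Fin n × Fin n → ℕ}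
    (h : ValidColoring n L' E χ) :
    ValidColoring n L' (E.image Prod.swap) (χ ∘ Prod.swap) := by
  obtain ⟨h1, h2, h3⟩ := h
  refine ⟨?_, ?_, ?_⟩
  · intro p hp; exact h1 _ (mem_swap.mp hp)
  · intro ℓ
    rcases h2 ℓ with hl | hr
    · right
      intro p hp q hq hpl hql hpq
      have := hl _ (mem_swap.mp hp) _ (mem_swap.mp hq) hpl hql
        (fun h => hpq (Prod.swap_injective h))
      simpa using this
    · left
      intro p hp q hq hpl hql hpq
      have := hr _ (mem_swap.mp hp) _ (mem_swap.mp hq) hpl hql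
        (fun h => hpq (Prod.swap_injective h))
      simpa using this
  · intro p hp i₁ j₁ h₁ h₂ hc hne1 hne2
    have hp' : (p.2, p.1) ∈ E := mem_swap.mp hp
    have h₁' : (p.2, i₁) ∈ E := mem_swap.mp h₁
    have h₂' : (j₁, p.1) ∈ E := mem_swap.mp h₂
    exact h3 (p.2, p.1) hp' j₁ i₁ h₂' h₁' hc.symm hne2 hne1

lemma requires_swap {L : ℕ} {E : Finset (Fin n × Fin n)}
    (hE : RequiresColors n L E) : RequiresColors n L (E.image Prod.swap) := by
  intro L' χ h
  have := valid_swap h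
  rw [swap_swap_image] at this
  exact hE L' _ this

lemma rowsInt_swap {E : Finset (Fin n × Fin n)} (h : RowsInt E) :
    ColsInt (E.image Prod.swap) := by
  intro j j' hj hj'
  have m1 : ∀ a b : Fin n, (a, b) ∈ E.image Prod.swap ↔ (b, a) ∈ E := by
    intro a b; exact mem_swap
  obtain ⟨i₀, hi₀⟩ := hj
  obtain ⟨i₁, hi₁⟩ := hj'
  obtain ⟨c, hc1, hc2⟩ := h j j' ⟨i₀, (m1 i₀ j).mp hi₀⟩ ⟨i₁, (m1 i₁ j').mp hi₁⟩
  exact ⟨c, (m1 c j).mpr hc1, (m1 c j').mpr hc2⟩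

lemma colsInt_swap {E : Finset (Fin n × Fin n)} (h : ColsInt E) :
    RowsInt (E.image Prod.swap) := by
  intro i i' hi hi'
  have m1 : ∀ a b : Fin n, (a, b) ∈ E.image Prod.swap ↔ (b, a) ∈ E := by
    intro a b; exact mem_swap
  obtain ⟨c₀, hc₀⟩ := hi
  obtain ⟨c₁, hc₁⟩ := hi'
  obtain ⟨c, hc1, hc2⟩ := h i i' ⟨c₀, (m1 i c₀).mp hc₀⟩ ⟨c₁, (m1 i' c₁).mp hc₁⟩
  exact ⟨c, (m1 i c).mpr hc1, (m1 i' c).mpr hc2⟩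

lemma phase_aux (L : ℕ) : ∀ k : ℕ, ∀ E : Finset (Fin n × Fin n),
    (E.image Prod.fst).card ≤ k →
    ∃ E' : Finset (Fin n × Fin n), E'.card = E.card ∧
      (RequiresColors n L E → RequiresColors n L E') ∧
      RowsInt E' ∧ (ColsInt E → ColsInt E') := by
  intro k
  induction k with
  | zero =>
    intro E hk
    refine ⟨E, rfl, id, ?_, id⟩
    intro a b ⟨j, hj⟩ _
    exfalso
    have : a ∈ E.image Prod.fst := Finset.mem_image_of_mem _ hj
    have := Finset.card_pos.mpr ⟨a, this⟩
    omega
  | succ k ih =>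
    intro E hk
    by_cases h : RowsInt E
    · exact ⟨E, rfl, id, h, id⟩
    · unfold RowsInt at h
      push_neg at h
      obtain ⟨i, i', hi, hi', hni0⟩ := h
      have hni : ¬ ∃ j, (i, j) ∈ E ∧ (i', j) ∈ E := by
        push_neg
        exact hni0
      have hii : i ≠ i' := by
        rintro rfl
        obtain ⟨j, hj⟩ := hi
        exact hni ⟨j, hj, hj⟩
      have hlt := merge_rows_lt (E := E) hii hi hi'
      have hk' : ((E.image (mg i i')).image Prod.fst).card ≤ k := by omega
      obtain ⟨E', hcard, hreq, hrows, hcols⟩ := ih (E.image (mg i i')) hk'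
      refine ⟨E', ?_, ?_, hrows, ?_⟩
      · rw [hcard, merge_card hni]
      · intro h; exact hreq (merge_requires hni h)
      · intro h; exact hcols (merge_colsInt h)

end Stmt10Aux

/-- If some `E ⊆ [n]×[n]` requires at least `L` colors, then there is an `E'` of the same
size, also requiring at least `L` colors, in which every pair of rows intersects and every
pair of columns intersects. -/
theorem stmt10 {n L : ℕ} (E : Finset (Fin n × Fin n)) (hE : RequiresColors n L E) :
    ∃ E' : Finset (Fin n × Fin n),
      E'.card = E.card ∧ RequiresColors n L E' ∧
      (∀ i i' : Fin n, (∃ j, (i, j) ∈ E') → (∃ j, (i', j) ∈ E') →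
        ∃ j, (i, j) ∈ E' ∧ (i', j) ∈ E') ∧
      (∀ j j' : Fin n, (∃ i, (i, j) ∈ E') → (∃ i, (i, j') ∈ E') →
        ∃ i, (i, j) ∈ E' ∧ (i, j') ∈ E') := by
  obtain ⟨E₁, hc1, hr1, hrows1, -⟩ := Stmt10Aux.phase_aux L (E.image Prod.fst).card E le_rfl
  have hreq1 : RequiresColors n L E₁ := hr1 hE
  obtain ⟨E₂, hc2, hr2, hrows2, hcols2⟩ :=
    Stmt10Aux.phase_aux L ((E₁.image Prod.swap).image Prod.fst).card (E₁.image Prod.swap) le_rfl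
  have hcolsE₂ : Stmt10Aux.ColsInt E₂ := hcols2 (Stmt10Aux.rowsInt_swap hrows1)
  refine ⟨E₂.image Prod.swap, ?_, ?_, ?_, ?_⟩
  · rw [Finset.card_image_of_injective _ Prod.swap_injective, hc2,
      Finset.card_image_of_injective _ Prod.swap_injective, hc1]
  · exact Stmt10Aux.requires_swap (hr2 (Stmt10Aux.requires_swap hreq1))
  · exact Stmt10Aux.colsInt_swap hcolsE₂
  · exact Stmt10Aux.rowsInt_swap hrows2
end

section
/- Let E ⊆ [n]×[n] with |E| = k, suppose E has more than √(3/2)·k^{2/3} distinct rows, every pair of rows of E intersects, and every row of E contains fewer than (3/2)·k^{1/3} elements of E. Then some column of E contains at least (3/2)·k^{1/3} elements of E. -/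
/-!
Let `r` be the number of rows and `i₀` a shortest row, of length `s`, so that `r * s ≤ k`.
Every row meets one of the at most `s` columns of `i₀`, so if `M` is the longest of these
columns then `r ≤ s * M`, and hence `r² ≤ r * s * M ≤ k * M`. As `r² > (3/2) k^{4/3}`, this
forces `M > (3/2) k^{1/3}`.
-/

open Finset

variable {α β : Type*} [DecidableEq α]

theorem Finset.exists_mem_image_fst_card_image_fst_mul_le (E : Finset (α × β))
    (hE : E.Nonempty) :
    ∃ i ∈ E.image Prod.fst, #(E.image Prod.fst) * #{p ∈ E | p.1 = i} ≤ #E := by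
  obtain ⟨i, hi, hmin⟩ := (E.image Prod.fst).exists_min_image (fun i => #{p ∈ E | p.1 = i})
    (hE.image _)
  refine ⟨i, hi, ?_⟩
  rw [mul_comm]
  exact mul_card_image_le_card_of_maps_to (fun p hp => mem_image_of_mem _ hp) _ hmin

theorem Finset.card_image_fst_le_sum_card_filter_snd [DecidableEq β] {E : Finset (α × β)}
    (hint : ∀ i i' : α, (∃ j, (i, j) ∈ E) → (∃ j, (i', j) ∈ E) →
      ∃ j, (i, j) ∈ E ∧ (i', j) ∈ E)
    {i₀ : α} (hi₀ : i₀ ∈ E.image Prod.fst) :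
    #(E.image Prod.fst) ≤
      ∑ j ∈ {p ∈ E | p.1 = i₀}.image Prod.snd, #{p ∈ E | p.2 = j} := by
  set C := {p ∈ E | p.1 = i₀}.image Prod.snd
  have hrows : E.image Prod.fst ⊆ {p ∈ E | p.2 ∈ C}.image Prod.fst := by
    intro i hi
    obtain ⟨j, hij, hi₀j⟩ := hint i i₀ (by simpa using hi) (by simpa using hi₀)
    exact mem_image.mpr ⟨(i, j), mem_filter.mpr ⟨hij, by simp [C, hi₀j]⟩, rfl⟩
  calc #(E.image Prod.fst)
      ≤ #{p ∈ E | p.2 ∈ C} := (card_le_card hrows).trans card_image_le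
    _ = ∑ j ∈ C, #{p ∈ E | p.2 = j} := by
      rw [card_eq_sum_card_fiberwise (f := Prod.snd) (s := {p ∈ E | p.2 ∈ C}) (t := C)
        fun p hp => (mem_filter.mp hp).2]
      simp only [filter_filter]
      refine sum_congr rfl fun j hj => congrArg card (filter_congr fun p _ => ?_)
      exact ⟨And.right, fun h => ⟨h ▸ hj, h⟩⟩

theorem Finset.exists_card_image_fst_sq_le_card_mul_card_filter_snd [DecidableEq β]
    {E : Finset (α × β)} (hE : E.Nonempty)
    (hint : ∀ i i' : α, (∃ j, (i, j) ∈ E) → (∃ j, (i', j) ∈ E) →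
      ∃ j, (i, j) ∈ E ∧ (i', j) ∈ E) :
    ∃ j, #(E.image Prod.fst) ^ 2 ≤ #E * #{p ∈ E | p.2 = j} := by
  obtain ⟨i₀, hi₀, hshortest⟩ := E.exists_mem_image_fst_card_image_fst_mul_le hE
  set row := {p ∈ E | p.1 = i₀}
  have hrow : row.Nonempty := by
    obtain ⟨p, hp, rfl⟩ := mem_image.mp hi₀
    exact ⟨p, mem_filter.mpr ⟨hp, rfl⟩⟩
  obtain ⟨j, -, hlongest⟩ := (row.image Prod.snd).exists_max_image
    (fun j => #{p ∈ E | p.2 = j}) (hrow.image _)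
  refine ⟨j, ?_⟩
  have hcover : #(E.image Prod.fst) ≤ #row * #{p ∈ E | p.2 = j} :=
    calc #(E.image Prod.fst)
        ≤ ∑ j ∈ row.image Prod.snd, #{p ∈ E | p.2 = j} :=
          card_image_fst_le_sum_card_filter_snd hint hi₀
      _ ≤ #(row.image Prod.snd) • #{p ∈ E | p.2 = j} := sum_le_card_nsmul _ _ _ hlongest
      _ ≤ #row * #{p ∈ E | p.2 = j} := Nat.mul_le_mul_right _ card_image_le
  calc #(E.image Prod.fst) ^ 2
      ≤ #(E.image Prod.fst) * (#row * #{p ∈ E | p.2 = j}) := by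
        rw [sq]; exact Nat.mul_le_mul_left _ hcover
    _ = #(E.image Prod.fst) * #row * #{p ∈ E | p.2 = j} := (mul_assoc _ _ _).symm
    _ ≤ #E * #{p ∈ E | p.2 = j} := Nat.mul_le_mul_right _ hshortest

theorem Real.sq_sqrt_three_halves_mul_rpow_two_thirds {k : ℝ} (hk : 0 ≤ k) :
    (√(3 / 2) * k ^ ((2 : ℝ) / 3)) ^ 2 = k * (3 / 2 * k ^ ((1 : ℝ) / 3)) := by
  have h43 : (k ^ ((2 : ℝ) / 3)) ^ 2 = k ^ ((4 : ℝ) / 3) := by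
    rw [← Real.rpow_natCast, ← Real.rpow_mul hk]; norm_num
  have h13 : k * k ^ ((1 : ℝ) / 3) = k ^ ((4 : ℝ) / 3) := by
    rw [← Real.rpow_one_add' hk (by norm_num)]; norm_num
  rw [mul_pow, Real.sq_sqrt (by norm_num), h43, ← h13]
  ring

theorem stmt12_general {n k : ℕ} (E : Finset (Fin n × Fin n)) (hE : E.card = k)
    (hrows : Real.sqrt (3 / 2) * (k : ℝ) ^ ((2 : ℝ) / 3) < ((E.image Prod.fst).card : ℝ))
    (hint : ∀ i i' : Fin n, (∃ j, (i, j) ∈ E) → (∃ j, (i', j) ∈ E) →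
      ∃ j, (i, j) ∈ E ∧ (i', j) ∈ E) :
    ∃ j : Fin n, 3 / 2 * (k : ℝ) ^ ((1 : ℝ) / 3) ≤
      ((E.filter (fun p => p.2 = j)).card : ℝ) := by
  have hE_nonempty : E.Nonempty := by
    have : 0 < #(E.image Prod.fst) := by
      exact_mod_cast (by positivity : 0 ≤ √(3 / 2) * (k : ℝ) ^ ((2 : ℝ) / 3)).trans_lt hrows
    exact image_nonempty.mp (card_pos.mp this)
  have hk : (0 : ℝ) < k := by exact_mod_cast hE ▸ card_pos.mpr hE_nonempty
  obtain ⟨j, hj⟩ := exists_card_image_fst_sq_le_card_mul_card_filter_snd hE_nonempty hint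
  refine ⟨j, le_of_lt (lt_of_mul_lt_mul_left ?_ hk.le)⟩
  calc (k : ℝ) * (3 / 2 * (k : ℝ) ^ ((1 : ℝ) / 3))
      = (√(3 / 2) * (k : ℝ) ^ ((2 : ℝ) / 3)) ^ 2 :=
        (Real.sq_sqrt_three_halves_mul_rpow_two_thirds hk.le).symm
    _ < #(E.image Prod.fst) ^ 2 := pow_lt_pow_left₀ hrows (by positivity) two_ne_zero
    _ ≤ k * #{p ∈ E | p.2 = j} := by exact_mod_cast hE ▸ hj

/-- If `E ⊆ [n]×[n]` has `k` elements, more than `√(3/2)·k^{2/3}` distinct rows, every two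
rows of `E` intersect, and every row of `E` contains fewer than `(3/2)·k^{1/3}` elements of
`E`, then some column of `E` contains at least `(3/2)·k^{1/3}` elements of `E`. -/
theorem stmt12 {n k : ℕ} (E : Finset (Fin n × Fin n)) (hE : E.card = k)
    (hrows : Real.sqrt (3 / 2) * (k : ℝ) ^ ((2 : ℝ) / 3) < ((E.image Prod.fst).card : ℝ))
    (hint : ∀ i i' : Fin n, (∃ j, (i, j) ∈ E) → (∃ j, (i', j) ∈ E) →
      ∃ j, (i, j) ∈ E ∧ (i', j) ∈ E)
    (hshort : ∀ i ∈ E.image Prod.fst,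
      ((E.filter (fun p => p.1 = i)).card : ℝ) < 3 / 2 * (k : ℝ) ^ ((1 : ℝ) / 3)) :
    ∃ j : Fin n, 3 / 2 * (k : ℝ) ^ ((1 : ℝ) / 3) ≤
      ((E.filter (fun p => p.2 = j)).card : ℝ) :=
  stmt12_general E hE hrows hint
end

section
/- Let E ⊆ [n]×[n] with |E| = k ≤ (n/√(3/2))^{3/2}/4 and let L ≤ n/2 be such that E admits a valid L-coloring. Then the k-fold direct product OR function on ⌊n/L⌋-bit blocks is a subfunction of the function mapping n×n Boolean matrices (A,B) to the k entries of the Boolean matrix product A•B indexed by E. That is, there exists a partial assignment of the entries of A and B (setting some entries to constants) such that, as functions of the remaining free entries, the k outputs (A•B)_{(i,j)} for (i,j) ∈ E equal k ORs over pairwise disjoint sets of at least ⌊n/L⌋ free Boolean variables each. -/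
open Finset

variable {n : ℕ}

def bmIdx (hn : 0 < n) (m ℓ : ℕ) (t : Fin m) : Fin n :=
  ⟨(ℓ * m + t.val) % n, Nat.mod_lt _ hn⟩

def rowC (E : Finset (Fin n × Fin n)) (χ : Fin n × Fin n → ℕ) (ℓ : ℕ) : Prop :=
  ∀ p ∈ E, ∀ q ∈ E, χ p = ℓ → χ q = ℓ → p ≠ q → p.1 ≠ q.1

lemma bmIdx_val {L : ℕ} (hn : 0 < n) {m ℓ : ℕ} (hℓ : ℓ < L) (hLm : L * m ≤ n) (t : Fin m) :
    (bmIdx hn m ℓ t).val = ℓ * m + t.val := by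
  apply Nat.mod_eq_of_lt
  have h1 : ℓ * m + t.val < (ℓ + 1) * m := by
    have := t.isLt
    calc ℓ * m + t.val < ℓ * m + m := by omega
    _ = (ℓ + 1) * m := by ring
  have h2 : (ℓ + 1) * m ≤ L * m := Nat.mul_le_mul_right m hℓ
  omega

lemma bmIdx_inj {L : ℕ} (hn : 0 < n) {m ℓ ℓ' : ℕ} (hm : 0 < m) (hℓ : ℓ < L) (hℓ' : ℓ' < L)
    (hLm : L * m ≤ n) {t t' : Fin m} (h : bmIdx hn m ℓ t = bmIdx hn m ℓ' t') :
    ℓ = ℓ' ∧ t = t' := by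
  have hv : ℓ * m + t.val = ℓ' * m + t'.val := by
    have h2 := congrArg Fin.val h
    rwa [bmIdx_val hn hℓ hLm, bmIdx_val hn hℓ' hLm] at h2
  have key : ∀ (a : ℕ) (s : Fin m), (a * m + s.val) / m = a := by
    intro a s
    rw [mul_comm, Nat.mul_add_div hm, Nat.div_eq_of_lt s.isLt]
    omega
  have hℓeq : ℓ = ℓ' := by
    have := congrArg (· / m) hv
    simpa [key] using this
  subst hℓeq
  refine ⟨rfl, Fin.ext ?_⟩
  omega

open Classical in
noncomputable def bmS (hn : 0 < n) (m : ℕ) (E : Finset (Fin n × Fin n))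
    (χ : Fin n × Fin n → ℕ) (p : Fin n × Fin n) :
    Finset ((Fin n × Fin n) ⊕ (Fin n × Fin n)) :=
  if rowC E χ (χ p) then univ.image (fun t : Fin m => Sum.inl (p.1, bmIdx hn m (χ p) t))
  else univ.image (fun t : Fin m => Sum.inr (bmIdx hn m (χ p) t, p.2))

open Classical in
noncomputable def bmC (hn : 0 < n) (m : ℕ) (E : Finset (Fin n × Fin n))
    (χ : Fin n × Fin n → ℕ) (p : Fin n × Fin n) :
    Finset ((Fin n × Fin n) ⊕ (Fin n × Fin n)) :=
  if rowC E χ (χ p) then univ.image (fun t : Fin m => Sum.inr (bmIdx hn m (χ p) t, p.2))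
  else univ.image (fun t : Fin m => Sum.inl (p.1, bmIdx hn m (χ p) t))

open Classical in
noncomputable def bmρ (hn : 0 < n) (m : ℕ) (E : Finset (Fin n × Fin n))
    (χ : Fin n × Fin n → ℕ) (v : (Fin n × Fin n) ⊕ (Fin n × Fin n)) : Option Bool :=
  if v ∈ E.biUnion (bmS hn m E χ) then none
  else if v ∈ E.biUnion (bmC hn m E χ) then some true else some false

lemma mem_bmS {hn : 0 < n} {m : ℕ} {E : Finset (Fin n × Fin n)} {χ : Fin n × Fin n → ℕ}
    {p : Fin n × Fin n} {v : (Fin n × Fin n) ⊕ (Fin n × Fin n)} :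
    v ∈ bmS hn m E χ p ↔
      (rowC E χ (χ p) ∧ ∃ t : Fin m, v = Sum.inl (p.1, bmIdx hn m (χ p) t)) ∨
      (¬rowC E χ (χ p) ∧ ∃ t : Fin m, v = Sum.inr (bmIdx hn m (χ p) t, p.2)) := by
  classical
  by_cases h : rowC E χ (χ p) <;> simp [bmS, h, eq_comm]

lemma mem_bmC {hn : 0 < n} {m : ℕ} {E : Finset (Fin n × Fin n)} {χ : Fin n × Fin n → ℕ}
    {p : Fin n × Fin n} {v : (Fin n × Fin n) ⊕ (Fin n × Fin n)} :
    v ∈ bmC hn m E χ p ↔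
      (rowC E χ (χ p) ∧ ∃ t : Fin m, v = Sum.inr (bmIdx hn m (χ p) t, p.2)) ∨
      (¬rowC E χ (χ p) ∧ ∃ t : Fin m, v = Sum.inl (p.1, bmIdx hn m (χ p) t)) := by
  classical
  by_cases h : rowC E χ (χ p) <;> simp [bmC, h, eq_comm]

/-- Embedding `OR^k_{⌊n/L⌋}` into the `E`-indexed outputs of Boolean matrix multiplication:
if `E` has `k ≤ (n/√(3/2))^{3/2}/4` elements and admits a valid `L`-coloring with
`L ≤ n/2`, then there is a partial assignment `ρ` of the entries of `A` (positions
`Sum.inl (i,l)`) and `B` (positions `Sum.inr (l,j)`) and pairwise disjoint sets `S p` of at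
least `⌊n/L⌋` free positions such that, for every completion `x` consistent with `ρ`, the
Boolean product entry `(A•B)_p` for `p ∈ E` equals the OR of the variables in `S p`. -/
theorem stmt13 {n k L : ℕ} (hn : 0 < n) (hL : 0 < L) (hLn : 2 * L ≤ n)
    (hk : (k : ℝ) ≤ ((n : ℝ) / Real.sqrt (3 / 2)) ^ ((3 : ℝ) / 2) / 4)
    (E : Finset (Fin n × Fin n)) (hE : E.card = k)
    (χ : Fin n × Fin n → ℕ) (hχ : ValidColoring n L E χ) :
    ∃ (ρ : (Fin n × Fin n) ⊕ (Fin n × Fin n) → Option Bool)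
      (S : Fin n × Fin n → Finset ((Fin n × Fin n) ⊕ (Fin n × Fin n))),
      (∀ p ∈ E, n / L ≤ (S p).card) ∧
      (∀ p ∈ E, ∀ q ∈ E, p ≠ q → Disjoint (S p) (S q)) ∧
      (∀ p ∈ E, ∀ v ∈ S p, ρ v = none) ∧
      (∀ x : (Fin n × Fin n) ⊕ (Fin n × Fin n) → Bool,
        (∀ v b, ρ v = some b → x v = b) →
        ∀ p ∈ E,
          ((∃ l : Fin n, x (Sum.inl (p.1, l)) = true ∧ x (Sum.inr (l, p.2)) = true) ↔
            ∃ v ∈ S p, x v = true)) := by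
  classical
  obtain ⟨hχL, hχty, hχ3⟩ := hχ
  set m : ℕ := n / L with hmdef
  have hm : 0 < m := Nat.div_pos (by omega) hL
  have hLm : L * m ≤ n := by rw [hmdef, mul_comm]; exact Nat.div_mul_le_self n L
  have hcolC : ∀ ℓ, ¬ rowC E χ ℓ →
      ∀ p ∈ E, ∀ q ∈ E, χ p = ℓ → χ q = ℓ → p ≠ q → p.2 ≠ q.2 :=
    fun ℓ h => (hχty ℓ).resolve_left h
  have hidx : ∀ {q r : Fin n × Fin n}, q ∈ E → r ∈ E → ∀ {t t' : Fin m},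
      bmIdx hn m (χ q) t = bmIdx hn m (χ r) t' → χ q = χ r :=
    by intro q r hq hr t t' h; exact (bmIdx_inj hn hm (hχL _ hq) (hχL _ hr) hLm h).1
  refine ⟨bmρ hn m E χ, bmS hn m E χ, ?_, ?_, ?_, ?_⟩
  · -- cardinality
    intro p hp
    have hℓ := hχL p hp
    have hinj1 : Function.Injective
        (fun t : Fin m => (Sum.inl (p.1, bmIdx hn m (χ p) t) :
          (Fin n × Fin n) ⊕ (Fin n × Fin n))) := by
      intro a b hab
      simp only [Sum.inl.injEq, Prod.mk.injEq, true_and] at hab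
      exact (bmIdx_inj hn hm hℓ hℓ hLm hab).2
    have hinj2 : Function.Injective
        (fun t : Fin m => (Sum.inr (bmIdx hn m (χ p) t, p.2) :
          (Fin n × Fin n) ⊕ (Fin n × Fin n))) := by
      intro a b hab
      simp only [Sum.inr.injEq, Prod.mk.injEq, and_true] at hab
      exact (bmIdx_inj hn hm hℓ hℓ hLm hab).2
    have hcard : (bmS hn m E χ p).card = m := by
      rw [bmS]
      split_ifs with h
      · rw [Finset.card_image_of_injective _ hinj1, card_univ, Fintype.card_fin]
      · rw [Finset.card_image_of_injective _ hinj2, card_univ, Fintype.card_fin]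
    omega
  · -- disjointness
    intro p hp q hq hpq
    rw [Finset.disjoint_left]
    intro v hvp hvq
    rcases mem_bmS.mp hvp with ⟨hr1, t1, rfl⟩ | ⟨hr1, t1, rfl⟩ <;>
      rcases mem_bmS.mp hvq with ⟨hr2, t2, heq⟩ | ⟨hr2, t2, heq⟩
    · simp only [Sum.inl.injEq, Prod.mk.injEq] at heq
      have hχeq : χ p = χ q := hidx hp hq heq.2
      exact (hr1 p hp q hq rfl hχeq.symm hpq) heq.1
    · simp at heq
    · simp at heq
    · simp only [Sum.inr.injEq, Prod.mk.injEq] at heq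
      have hχeq : χ p = χ q := hidx hp hq heq.1
      exact (hcolC (χ p) hr1 p hp q hq rfl hχeq.symm hpq) heq.2
  · -- free positions unassigned
    intro p hp v hv
    rw [bmρ, if_pos (Finset.mem_biUnion.mpr ⟨p, hp, hv⟩)]
  · -- main equivalence
    intro x hx p hp
    have hxFT : ∀ v, v ∉ E.biUnion (bmS hn m E χ) → x v = true →
        v ∈ E.biUnion (bmC hn m E χ) := by
      intro v h1 h2
      by_contra h3
      have := hx v false (by rw [bmρ, if_neg h1, if_neg h3])
      rw [this] at h2
      exact Bool.false_ne_true h2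
    have hxTrue : ∀ v, v ∉ E.biUnion (bmS hn m E χ) → v ∈ E.biUnion (bmC hn m E χ) →
        x v = true := by
      intro v h1 h2
      exact hx v true (by rw [bmρ, if_neg h1, if_pos h2])
    have cross : ∀ q ∈ E, ∀ r ∈ E, q.1 = p.1 → r.2 = p.2 → χ q = χ r →
        q ≠ p → r ≠ p → False := by
      intro q hq r hr hq1 hr2 hqr hqp hrp
      have hre : ((r.1, p.2) : Fin n × Fin n) = r := by rw [← hr2]
      have hqe : ((p.1, q.2) : Fin n × Fin n) = q := by rw [← hq1]
      apply hχ3 p hp r.1 q.2 (hre ▸ hr) (hqe ▸ hq)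
      · rw [hre, hqe]; exact hqr.symm
      · intro h; exact hrp (Prod.ext h hr2)
      · intro h; exact hqp (Prod.ext hq1 h)
    by_cases hrc : rowC E χ (χ p)
    · -- row-type color class
      constructor
      · rintro ⟨l, hA, hB⟩
        by_cases hf : (Sum.inl (p.1, l) : (Fin n × Fin n) ⊕ (Fin n × Fin n))
            ∈ E.biUnion (bmS hn m E χ)
        · obtain ⟨q, hq, hvq⟩ := Finset.mem_biUnion.mp hf
          rcases mem_bmS.mp hvq with ⟨hrq, t, heq⟩ | ⟨hrq, t, heq⟩
          swap
          · simp at heq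
          simp only [Sum.inl.injEq, Prod.mk.injEq] at heq
          obtain ⟨hq1, hleq⟩ := heq
          by_cases hpq : q = p
          · subst hpq; exact ⟨_, hvq, hA⟩
          · exfalso
            by_cases hf2 : (Sum.inr (l, p.2) : (Fin n × Fin n) ⊕ (Fin n × Fin n))
                ∈ E.biUnion (bmS hn m E χ)
            · obtain ⟨r, hr, hvr⟩ := Finset.mem_biUnion.mp hf2
              rcases mem_bmS.mp hvr with ⟨_, t', heq'⟩ | ⟨hnr, t', heq'⟩
              · simp at heq'
              simp only [Sum.inr.injEq, Prod.mk.injEq] at heq'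
              have hχqr : χ q = χ r := hidx hq hr (by rw [← hleq, ← heq'.1])
              exact hnr (by rw [← hχqr]; exact hrq)
            · have hft := hxFT _ hf2 hB
              obtain ⟨r, hr, hvr⟩ := Finset.mem_biUnion.mp hft
              rcases mem_bmC.mp hvr with ⟨hrr, t', heq'⟩ | ⟨_, t', heq'⟩
              swap
              · simp at heq'
              simp only [Sum.inr.injEq, Prod.mk.injEq] at heq'
              obtain ⟨hleq', hr2⟩ := heq'
              have hχqr : χ q = χ r := hidx hq hr (by rw [← hleq, ← hleq'])
              by_cases hrp : r = p
              · exact (hrc q hq p hp (by rw [hχqr, hrp]) rfl hpq) hq1.symm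
              · exact cross q hq r hr hq1.symm hr2.symm hχqr hpq hrp
        · have hft := hxFT _ hf hA
          obtain ⟨q, hq, hvq⟩ := Finset.mem_biUnion.mp hft
          rcases mem_bmC.mp hvq with ⟨_, t, heq⟩ | ⟨hnq, t, heq⟩
          · simp at heq
          simp only [Sum.inl.injEq, Prod.mk.injEq] at heq
          obtain ⟨hq1, hleq⟩ := heq
          exfalso
          by_cases hf2 : (Sum.inr (l, p.2) : (Fin n × Fin n) ⊕ (Fin n × Fin n))
              ∈ E.biUnion (bmS hn m E χ)
          · obtain ⟨r, hr, hvr⟩ := Finset.mem_biUnion.mp hf2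
            rcases mem_bmS.mp hvr with ⟨_, t', heq'⟩ | ⟨hnr, t', heq'⟩
            · simp at heq'
            simp only [Sum.inr.injEq, Prod.mk.injEq] at heq'
            obtain ⟨hleq', hr2⟩ := heq'
            have hχqr : χ q = χ r := hidx hq hr (by rw [← hleq, ← hleq'])
            by_cases hqp : q = p
            · exact hnq (by rw [hqp]; exact hrc)
            by_cases hrp : r = p
            · exact hnr (by rw [hrp]; exact hrc)
            exact cross q hq r hr hq1.symm hr2.symm hχqr hqp hrp
          · have hft2 := hxFT _ hf2 hB
            obtain ⟨r, hr, hvr⟩ := Finset.mem_biUnion.mp hft2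
            rcases mem_bmC.mp hvr with ⟨hrr, t', heq'⟩ | ⟨_, t', heq'⟩
            swap
            · simp at heq'
            simp only [Sum.inr.injEq, Prod.mk.injEq] at heq'
            have hχqr : χ q = χ r := hidx hq hr (by rw [← hleq, ← heq'.1])
            exact hnq (by rw [hχqr]; exact hrr)
      · rintro ⟨v, hv, hxv⟩
        rcases mem_bmS.mp hv with ⟨_, t, rfl⟩ | ⟨hnr, _⟩
        swap
        · exact absurd hrc hnr
        refine ⟨bmIdx hn m (χ p) t, hxv, ?_⟩
        have hft : (Sum.inr (bmIdx hn m (χ p) t, p.2) : (Fin n × Fin n) ⊕ (Fin n × Fin n))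
            ∈ E.biUnion (bmC hn m E χ) :=
          Finset.mem_biUnion.mpr ⟨p, hp, mem_bmC.mpr (Or.inl ⟨hrc, t, rfl⟩)⟩
        have hnf : (Sum.inr (bmIdx hn m (χ p) t, p.2) : (Fin n × Fin n) ⊕ (Fin n × Fin n))
            ∉ E.biUnion (bmS hn m E χ) := by
          intro hmem
          obtain ⟨r, hr, hvr⟩ := Finset.mem_biUnion.mp hmem
          rcases mem_bmS.mp hvr with ⟨_, t', heq'⟩ | ⟨hnr, t', heq'⟩
          · simp at heq'
          simp only [Sum.inr.injEq, Prod.mk.injEq] at heq'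
          have hχpr : χ p = χ r := hidx hp hr heq'.1
          exact hnr (by rw [← hχpr]; exact hrc)
        exact hxTrue _ hnf hft
    · -- column-type color class
      constructor
      · rintro ⟨l, hA, hB⟩
        by_cases hf : (Sum.inr (l, p.2) : (Fin n × Fin n) ⊕ (Fin n × Fin n))
            ∈ E.biUnion (bmS hn m E χ)
        · obtain ⟨q, hq, hvq⟩ := Finset.mem_biUnion.mp hf
          rcases mem_bmS.mp hvq with ⟨hrq, t, heq⟩ | ⟨hnq, t, heq⟩
          · simp at heq
          simp only [Sum.inr.injEq, Prod.mk.injEq] at heq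
          obtain ⟨hleq, hq2⟩ := heq
          by_cases hpq : q = p
          · subst hpq; exact ⟨_, hvq, hB⟩
          · exfalso
            by_cases hf2 : (Sum.inl (p.1, l) : (Fin n × Fin n) ⊕ (Fin n × Fin n))
                ∈ E.biUnion (bmS hn m E χ)
            · obtain ⟨r, hr, hvr⟩ := Finset.mem_biUnion.mp hf2
              rcases mem_bmS.mp hvr with ⟨hrr, t', heq'⟩ | ⟨_, t', heq'⟩
              swap
              · simp at heq'
              simp only [Sum.inl.injEq, Prod.mk.injEq] at heq'
              have hχqr : χ q = χ r := hidx hq hr (by rw [← hleq, ← heq'.2])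
              exact hnq (by rw [hχqr]; exact hrr)
            · have hft := hxFT _ hf2 hA
              obtain ⟨r, hr, hvr⟩ := Finset.mem_biUnion.mp hft
              rcases mem_bmC.mp hvr with ⟨hrr, t', heq'⟩ | ⟨hnr, t', heq'⟩
              · simp at heq'
              simp only [Sum.inl.injEq, Prod.mk.injEq] at heq'
              obtain ⟨hr1, hleq'⟩ := heq'
              have hχqr : χ q = χ r := hidx hq hr (by rw [← hleq, ← hleq'])
              by_cases hrp : r = p
              · exact (hcolC (χ p) hrc q hq p hp (by rw [hχqr, hrp]) rfl hpq) hq2.symm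
              · exact cross r hr q hq hr1.symm hq2.symm hχqr.symm hrp hpq
        · have hft := hxFT _ hf hB
          obtain ⟨q, hq, hvq⟩ := Finset.mem_biUnion.mp hft
          rcases mem_bmC.mp hvq with ⟨hrq, t, heq⟩ | ⟨_, t, heq⟩
          swap
          · simp at heq
          simp only [Sum.inr.injEq, Prod.mk.injEq] at heq
          obtain ⟨hleq, hq2⟩ := heq
          exfalso
          by_cases hf2 : (Sum.inl (p.1, l) : (Fin n × Fin n) ⊕ (Fin n × Fin n))
              ∈ E.biUnion (bmS hn m E χ)
          · obtain ⟨r, hr, hvr⟩ := Finset.mem_biUnion.mp hf2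
            rcases mem_bmS.mp hvr with ⟨hrr, t', heq'⟩ | ⟨_, t', heq'⟩
            swap
            · simp at heq'
            simp only [Sum.inl.injEq, Prod.mk.injEq] at heq'
            obtain ⟨hr1, hleq'⟩ := heq'
            have hχqr : χ q = χ r := hidx hq hr (by rw [← hleq, ← hleq'])
            by_cases hqp : q = p
            · exact hrc (by rw [← hqp]; exact hrq)
            by_cases hrp : r = p
            · exact hrc (by rw [← hrp]; exact hrr)
            exact cross r hr q hq hr1.symm hq2.symm hχqr.symm hrp hqp
          · have hft2 := hxFT _ hf2 hA
            obtain ⟨r, hr, hvr⟩ := Finset.mem_biUnion.mp hft2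
            rcases mem_bmC.mp hvr with ⟨_, t', heq'⟩ | ⟨hnr, t', heq'⟩
            · simp at heq'
            simp only [Sum.inl.injEq, Prod.mk.injEq] at heq'
            have hχqr : χ q = χ r := hidx hq hr (by rw [← hleq, ← heq'.2])
            exact hnr (by rw [← hχqr]; exact hrq)
      · rintro ⟨v, hv, hxv⟩
        rcases mem_bmS.mp hv with ⟨hrr, _⟩ | ⟨_, t, rfl⟩
        · exact absurd hrr hrc
        refine ⟨bmIdx hn m (χ p) t, ?_, hxv⟩
        have hft : (Sum.inl (p.1, bmIdx hn m (χ p) t) : (Fin n × Fin n) ⊕ (Fin n × Fin n))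
            ∈ E.biUnion (bmC hn m E χ) :=
          Finset.mem_biUnion.mpr ⟨p, hp, mem_bmC.mpr (Or.inr ⟨hrc, t, rfl⟩)⟩
        have hnf : (Sum.inl (p.1, bmIdx hn m (χ p) t) : (Fin n × Fin n) ⊕ (Fin n × Fin n))
            ∉ E.biUnion (bmS hn m E χ) := by
          intro hmem
          obtain ⟨r, hr, hvr⟩ := Finset.mem_biUnion.mp hmem
          rcases mem_bmS.mp hvr with ⟨hrr, t', heq'⟩ | ⟨_, t', heq'⟩
          swap
          · simp at heq'
          simp only [Sum.inl.injEq, Prod.mk.injEq] at heq'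
          have hχpr : χ p = χ r := hidx hp hr heq'.2
          exact hrc (by rw [hχpr]; exact hrr)
        exact hxTrue _ hnf hft
end
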